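/- Let n be an odd positive integer, K = (n+1)/2, and consider the uniform mesh where all cell half-widths are equal: p₁ = ⋯ = p_K = q₁ = ⋯ = q_K = h > 0. Then the associated Q² spectral element matrix L̄_h for the Laplacian with Dirichlet boundary conditions is invertible and L̄_h⁻¹ ≥ 0 entrywise. -/

import Mathlib

open Matrix

/-- The `Q²` spectral element operator for the Laplacian with Dirichlet boundary
conditions on the uniform mesh with grid spacing `h`, applied to `u` at grid point `(i,j)`. -/
noncomputable def LhOpUnif (n : ℕ) (h : ℝ) (u : ℕ → ℕ → ℝ) (i j : ℕ) : ℝ :=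
  if i = 0 ∨ i = n + 1 ∨ j = 0 ∨ j = n + 1 then u i j
  else if i % 2 = 1 then
    if j % 2 = 1 then
      -- cell center
      (-u (i - 1) j - u (i + 1) j + 4 * u i j - u i (j + 1) - u i (j - 1)) / h ^ 2
    else
      -- edge center, edge parallel to the x-axis
      (-u (i - 1) j + 2 * u i j - u (i + 1) j) / h ^ 2
        + (u i (j - 2) - 8 * u i (j - 1) + 14 * u i j - 8 * u i (j + 1) + u i (j + 2))
          / (4 * h ^ 2)
  else
    if j % 2 = 1 then
      -- edge center, edge parallel to the y-axis
      (u (i - 2) j - 8 * u (i - 1) j + 14 * u i j - 8 * u (i + 1) j + u (i + 2) j) / (4 * h ^ 2)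
        + (-u i (j - 1) + 2 * u i j - u i (j + 1)) / h ^ 2
    else
      -- knot
      (u (i - 2) j - 8 * u (i - 1) j + 14 * u i j - 8 * u (i + 1) j + u (i + 2) j) / (4 * h ^ 2)
        + (u i (j - 2) - 8 * u i (j - 1) + 14 * u i j - 8 * u i (j + 1) + u i (j + 2))
          / (4 * h ^ 2)

/-- The matrix `L̄_h` of the uniform-mesh `Q²` spectral element operator, acting on
`ℝ^{(n+2)×(n+2)}`, obtained by applying the operator to the standard basis vectors. -/
noncomputable def LhMatUnif (n : ℕ) (h : ℝ) :
    Matrix (Fin (n + 2) × Fin (n + 2)) (Fin (n + 2) × Fin (n + 2)) ℝ :=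
  Matrix.of fun x y =>
    LhOpUnif n h (fun a b => if a = (y.1 : ℕ) ∧ b = (y.2 : ℕ) then 1 else 0) (x.1 : ℕ) (x.2 : ℕ)

/-!
A discrete minimum principle for a row combination of `L̄_h`. Let `K` be the one-dimensional
operator that, at every knot (even index), adds a quarter of the values at the two neighbouring
cell centres. Applied to the one-dimensional `Q²` stencil (the three-point second difference at
cell centres, the fourth-order five-point stencil at knots), `K` gives `3/2` times the three-point
second difference at knots. Hence `M = K ⊗ K`, extended by the identity on the boundary, turns
`L̄_h` into an operator with nine-point stencils whose off-diagonal coefficients are all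
nonpositive; `n` odd guarantees that `K` at an interior node only involves interior nodes.
As `M ≥ 0` and `M L̄_h w > 0` for the barrier `w = 1 + x (n + 1 - x)`, looking at the minimum
of `u / w` shows that `L̄_h u ≥ 0` forces `u ≥ 0`, and a matrix with this property is invertible
with nonnegative inverse.
-/

theorem Matrix.isUnit_det_and_inv_nonneg_of_mulVec_nonneg {ι : Type*} [Fintype ι] [DecidableEq ι]
    (A : Matrix ι ι ℝ) (hA : ∀ v, 0 ≤ A *ᵥ v → 0 ≤ v) :
    IsUnit A.det ∧ ∀ x y, 0 ≤ A⁻¹ x y := by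
  have hdet : IsUnit A.det := by
    refine isUnit_iff_ne_zero.mpr fun h0 => ?_
    obtain ⟨v, hv0, hv⟩ := exists_mulVec_eq_zero_iff.mpr h0
    refine hv0 (le_antisymm ?_ (hA v hv.ge))
    simpa using hA (-v) (by rw [mulVec_neg, hv, neg_zero])
  refine ⟨hdet, fun x y => ?_⟩
  have hcol : A *ᵥ (A⁻¹ *ᵥ Pi.single y 1) = Pi.single y 1 := by
    rw [mulVec_mulVec, mul_nonsing_inv A hdet, one_mulVec]
  have := hA _ (hcol ▸ Pi.single_nonneg.mpr zero_le_one) x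
  rwa [mulVec_single_one] at this

theorem LinearMap.nonneg_on_of_apply_nonneg_on {α : Type*} {s : Finset α}
    (L M : (α → ℝ) →ₗ[ℝ] α → ℝ)
    (hM : ∀ f : α → ℝ, (∀ q ∈ s, 0 ≤ f q) → ∀ p ∈ s, 0 ≤ M f p)
    (hML : ∀ p ∈ s, ∀ V : α → ℝ, (∀ q ∈ s, 0 ≤ V q) → V p = 0 → M (L V) p ≤ 0)
    {w : α → ℝ} (hw : ∀ p ∈ s, 0 < w p) (hMLw : ∀ p ∈ s, 0 < M (L w) p)
    {u : α → ℝ} (hu : ∀ p ∈ s, 0 ≤ L u p) : ∀ p ∈ s, 0 ≤ u p := by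
  by_contra! ⟨p₀, hp₀, hneg⟩
  obtain ⟨p, hp, hmin⟩ := s.exists_min_image (fun q => u q / w q) ⟨p₀, hp₀⟩
  set t := u p / w p
  have ht : t < 0 := (hmin p₀ hp₀).trans_lt (div_neg_of_neg_of_pos hneg (hw p₀ hp₀))
  have hV : ∀ q ∈ s, 0 ≤ (u - t • w) q := fun q hq => by
    have := (le_div_iff₀ (hw q hq)).mp (hmin q hq)
    simp only [Pi.sub_apply, Pi.smul_apply, smul_eq_mul]
    linarith
  have hVp : (u - t • w) p = 0 := by
    simp [t, div_mul_cancel₀ _ (hw p hp).ne']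
  have key := hML p hp _ hV hVp
  simp only [map_sub, map_smul, Pi.sub_apply, Pi.smul_apply, smul_eq_mul] at key
  nlinarith [hM _ hu p hp, hMLw p hp]

namespace Q2Uniform

def secondDiff (u : ℕ → ℝ) (k : ℕ) : ℝ :=
  2 * u k - u (k - 1) - u (k + 1)

noncomputable def q2Stencil (u : ℕ → ℝ) (k : ℕ) : ℝ :=
  if k % 2 = 1 then secondDiff u k
  else (u (k - 2) - 8 * u (k - 1) + 14 * u k - 8 * u (k + 1) + u (k + 2)) / 4

noncomputable def knotCombination (f : ℕ → ℝ) (k : ℕ) : ℝ :=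
  if k % 2 = 1 then f k else f k + (f (k - 1) + f (k + 1)) / 4

noncomputable def knotWeight (k : ℕ) : ℝ :=
  if k % 2 = 1 then 1 else 3 / 2

theorem knotCombination_q2Stencil (u : ℕ → ℝ) {k : ℕ} (hk : 0 < k) :
    knotCombination (q2Stencil u) k = knotWeight k * secondDiff u k := by
  unfold knotCombination knotWeight
  split_ifs with hodd
  · rw [q2Stencil, if_pos hodd, one_mul]
  · rw [q2Stencil, q2Stencil, q2Stencil, if_neg hodd, if_pos (by omega), if_pos (by omega)]
    simp only [secondDiff, show k - 1 - 1 = k - 2 by omega, Nat.sub_add_cancel hk,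
      Nat.add_sub_cancel]
    ring

theorem knotCombination_const (c : ℝ) (k : ℕ) :
    knotCombination (fun _ => c) k = knotWeight k * c := by
  unfold knotCombination knotWeight
  split_ifs <;> ring

theorem knotCombination_mul_left (c : ℝ) (f : ℕ → ℝ) (k : ℕ) :
    knotCombination (fun m => c * f m) k = c * knotCombination f k := by
  unfold knotCombination
  split_ifs <;> ring

theorem knotWeight_pos (k : ℕ) : 0 < knotWeight k := by
  unfold knotWeight
  split_ifs <;> norm_num

theorem knotCombination_nonneg {f : ℕ → ℝ} {k : ℕ} (hf : ∀ m ≤ k + 1, 0 ≤ f m) :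
    0 ≤ knotCombination f k := by
  have := hf k (by omega)
  have := hf (k - 1) (by omega)
  have := hf (k + 1) le_rfl
  unfold knotCombination
  split_ifs <;> positivity

theorem knotCombination_congr_of_interior {n : ℕ} (hn : Odd n) {k : ℕ} (hk₀ : 1 ≤ k)
    (hkn : k ≤ n) {f g : ℕ → ℝ} (hfg : ∀ m, 1 ≤ m → m ≤ n → f m = g m) :
    knotCombination f k = knotCombination g k := by
  obtain ⟨r, rfl⟩ := hn
  unfold knotCombination
  split_ifs
  · exact hfg k hk₀ hkn
  · rw [hfg k hk₀ hkn, hfg (k - 1) (by omega) (by omega), hfg (k + 1) (by omega) (by omega)]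

theorem secondDiff_quadratic (N : ℝ) {k : ℕ} (hk : 0 < k) :
    secondDiff (fun a : ℕ => 1 + a * (N - a)) k = 2 := by
  simp only [secondDiff, Nat.cast_sub (Nat.one_le_of_lt hk)]
  push_cast
  ring

def grid (n : ℕ) : Finset (ℕ × ℕ) :=
  Finset.range (n + 2) ×ˢ Finset.range (n + 2)

theorem mem_grid {n : ℕ} {p : ℕ × ℕ} : p ∈ grid n ↔ p.1 ≤ n + 1 ∧ p.2 ≤ n + 1 := by
  simp only [grid, Finset.mem_product, Finset.mem_range]
  omega

noncomputable def lh (n : ℕ) (h : ℝ) : (ℕ × ℕ → ℝ) →ₗ[ℝ] ℕ × ℕ → ℝ where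
  toFun u p := LhOpUnif n h (Function.curry u) p.1 p.2
  map_add' u v := by
    ext p
    simp only [LhOpUnif, Function.curry_apply, Pi.add_apply]
    split_ifs <;> ring
  map_smul' c u := by
    ext p
    simp only [LhOpUnif, Function.curry_apply, Pi.smul_apply, smul_eq_mul, RingHom.id_apply]
    split_ifs <;> ring

theorem lh_apply_of_boundary {n : ℕ} {h : ℝ} (u : ℕ × ℕ → ℝ) {i j : ℕ}
    (hb : i = 0 ∨ i = n + 1 ∨ j = 0 ∨ j = n + 1) : lh n h u (i, j) = u (i, j) :=
  if_pos hb

theorem lh_apply_of_interior {n : ℕ} {h : ℝ} (u : ℕ × ℕ → ℝ) {i j : ℕ}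
    (hi₀ : 1 ≤ i) (hin : i ≤ n) (hj₀ : 1 ≤ j) (hjn : j ≤ n) :
    lh n h u (i, j) =
      (q2Stencil (fun a => u (a, j)) i + q2Stencil (fun b => u (i, b)) j) / h ^ 2 := by
  change LhOpUnif n h (Function.curry u) i j = _
  simp only [LhOpUnif, q2Stencil, secondDiff, Function.curry_apply]
  rw [if_neg (by omega)]
  split_ifs <;> first | omega | ring

noncomputable def gridCombination (n : ℕ) : (ℕ × ℕ → ℝ) →ₗ[ℝ] ℕ × ℕ → ℝ where
  toFun f p :=
    if p.1 = 0 ∨ p.1 = n + 1 ∨ p.2 = 0 ∨ p.2 = n + 1 then f p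
    else knotCombination (fun a => knotCombination (fun b => f (a, b)) p.2) p.1
  map_add' f g := by
    ext p
    simp only [knotCombination, Pi.add_apply]
    split_ifs <;> ring
  map_smul' c f := by
    ext p
    simp only [knotCombination, Pi.smul_apply, smul_eq_mul, RingHom.id_apply]
    split_ifs <;> ring

theorem gridCombination_apply_of_boundary {n : ℕ} (f : ℕ × ℕ → ℝ) {i j : ℕ}
    (hb : i = 0 ∨ i = n + 1 ∨ j = 0 ∨ j = n + 1) : gridCombination n f (i, j) = f (i, j) :=
  if_pos hb

theorem gridCombination_apply_of_interior {n : ℕ} (f : ℕ × ℕ → ℝ) {i j : ℕ}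
    (hi₀ : 1 ≤ i) (hin : i ≤ n) (hj₀ : 1 ≤ j) (hjn : j ≤ n) :
    gridCombination n f (i, j) =
      knotCombination (fun a => knotCombination (fun b => f (a, b)) j) i :=
  if_neg (by omega)

theorem gridCombination_nonneg (n : ℕ) (f : ℕ × ℕ → ℝ) (hf : ∀ q ∈ grid n, 0 ≤ f q) :
    ∀ p ∈ grid n, 0 ≤ gridCombination n f p := by
  rintro ⟨i, j⟩ hp
  rw [mem_grid] at hp
  by_cases hb : i = 0 ∨ i = n + 1 ∨ j = 0 ∨ j = n + 1
  · rw [gridCombination_apply_of_boundary f hb]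
    exact hf _ (mem_grid.mpr hp)
  · rw [gridCombination_apply_of_interior f (by omega) (by omega) (by omega) (by omega)]
    exact knotCombination_nonneg fun a ha => knotCombination_nonneg fun b hb =>
      hf _ (mem_grid.mpr ⟨by omega, by omega⟩)

theorem gridCombination_lh_apply {n : ℕ} (hn : Odd n) (h : ℝ) (u : ℕ × ℕ → ℝ) {i j : ℕ}
    (hi₀ : 1 ≤ i) (hin : i ≤ n) (hj₀ : 1 ≤ j) (hjn : j ≤ n) :
    gridCombination n (lh n h u) (i, j) =
      (knotWeight i * knotCombination (fun b => secondDiff (fun a => u (a, b)) i) j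
        + knotWeight j * knotCombination (fun a => secondDiff (fun b => u (a, b)) j) i)
        / h ^ 2 := by
  rw [gridCombination_apply_of_interior _ hi₀ hin hj₀ hjn,
    knotCombination_congr_of_interior hn hi₀ hin fun a ha₀ han =>
      knotCombination_congr_of_interior hn hj₀ hjn fun b hb₀ hbn =>
        lh_apply_of_interior u ha₀ han hb₀ hbn]
  have hsplit : ∀ X Y : ℕ → ℕ → ℝ,
      knotCombination (fun a => knotCombination (fun b => (X a b + Y a b) / h ^ 2) j) i =
        (knotCombination (fun b => knotCombination (fun a => X a b) i) j
          + knotCombination (fun a => knotCombination (fun b => Y a b) j) i) / h ^ 2 := by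
    intro X Y
    simp only [knotCombination]
    split_ifs <;> ring
  rw [hsplit]
  simp only [knotCombination_q2Stencil _ hi₀, knotCombination_q2Stencil _ hj₀,
    knotCombination_mul_left]

theorem gridCombination_lh_nonpos {n : ℕ} (hn : Odd n) (h : ℝ) :
    ∀ p ∈ grid n, ∀ V : ℕ × ℕ → ℝ, (∀ q ∈ grid n, 0 ≤ V q) → V p = 0 →
      gridCombination n (lh n h V) p ≤ 0 := by
  rintro ⟨i, j⟩ hp V hV hV0
  rw [mem_grid] at hp
  by_cases hb : i = 0 ∨ i = n + 1 ∨ j = 0 ∨ j = n + 1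
  · rw [gridCombination_apply_of_boundary _ hb, lh_apply_of_boundary _ hb, hV0]
  rw [gridCombination_lh_apply hn h V (by omega) (by omega) (by omega) (by omega)]
  refine div_nonpos_of_nonpos_of_nonneg ?_ (sq_nonneg h)
  have hV' : ∀ a ≤ i + 1, ∀ b ≤ j + 1, 0 ≤ V (a, b) := fun a ha b hb =>
    hV _ (mem_grid.mpr ⟨by omega, by omega⟩)
  simp only [knotCombination, knotWeight, secondDiff, hV0]
  -- the combined stencils are `(4; -1)`, `(5; -1, -1/4)` and `(6; -3/4)`: nine-point stencils
  -- with nonpositive off-diagonal coefficients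
  split_ifs <;>
    linarith [hV' (i - 1) (by omega) j le_self_add, hV' (i + 1) le_rfl j le_self_add,
      hV' i le_self_add (j - 1) (by omega), hV' i le_self_add (j + 1) le_rfl,
      hV' (i - 1) (by omega) (j - 1) (by omega), hV' (i - 1) (by omega) (j + 1) le_rfl,
      hV' (i + 1) le_rfl (j - 1) (by omega), hV' (i + 1) le_rfl (j + 1) le_rfl]

noncomputable def barrier (n : ℕ) (p : ℕ × ℕ) : ℝ :=
  1 + p.1 * ((n : ℝ) + 1 - p.1)

theorem barrier_pos (n : ℕ) : ∀ p ∈ grid n, 0 < barrier n p := by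
  rintro ⟨a, b⟩ hp
  have ha : (a : ℝ) ≤ n + 1 := by exact_mod_cast (mem_grid.mp hp).1
  have := mul_nonneg a.cast_nonneg (sub_nonneg.mpr ha)
  simp only [barrier]
  linarith

theorem gridCombination_lh_barrier_pos {n : ℕ} (hn : Odd n) {h : ℝ} (hh : h ≠ 0) :
    ∀ p ∈ grid n, 0 < gridCombination n (lh n h (barrier n)) p := by
  rintro ⟨i, j⟩ hp
  rw [mem_grid] at hp
  by_cases hb : i = 0 ∨ i = n + 1 ∨ j = 0 ∨ j = n + 1
  · rw [gridCombination_apply_of_boundary _ hb, lh_apply_of_boundary _ hb]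
    exact barrier_pos n _ (mem_grid.mpr hp)
  rw [gridCombination_lh_apply hn h _ (by omega) (by omega) (by omega) (by omega)]
  have hx : ∀ b, secondDiff (fun a => barrier n (a, b)) i = 2 := fun b =>
    secondDiff_quadratic ((n : ℝ) + 1) (by omega)
  have hy : ∀ a, secondDiff (fun b => barrier n (a, b)) j = 0 := fun a => by
    simp only [secondDiff, barrier]
    ring
  simp only [hx, hy, knotCombination_const]
  have := knotWeight_pos i
  have := knotWeight_pos j
  positivity

noncomputable def extend {n : ℕ} (v : Fin (n + 2) × Fin (n + 2) → ℝ) : ℕ × ℕ → ℝ :=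
  ∑ y, v y • Pi.single ((y.1 : ℕ), (y.2 : ℕ)) 1

theorem extend_apply {n : ℕ} (v : Fin (n + 2) × Fin (n + 2) → ℝ)
    (x : Fin (n + 2) × Fin (n + 2)) :
    extend v (x.1, x.2) = v x := by
  simp [extend, Finset.sum_apply, Pi.single_apply, Fin.val_inj, ← Prod.ext_iff]

theorem LhMatUnif_mulVec_apply (n : ℕ) (h : ℝ) (v : Fin (n + 2) × Fin (n + 2) → ℝ)
    (x : Fin (n + 2) × Fin (n + 2)) :
    (LhMatUnif n h *ᵥ v) x = lh n h (extend v) (x.1, x.2) := by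
  simp only [extend, map_sum, map_smul, Finset.sum_apply, Pi.smul_apply, smul_eq_mul, mulVec,
    dotProduct, LhMatUnif, of_apply]
  refine Finset.sum_congr rfl fun y _ => ?_
  rw [mul_comm]
  congr 2
  funext a b
  simp [Pi.single_apply, Prod.ext_iff]

end Q2Uniform

open Q2Uniform

theorem Q2_monotone_on_uniform_mesh_general
    (n : ℕ) (hodd : Odd n) (h : ℝ) (hh : 0 < h) :
    IsUnit (LhMatUnif n h).det ∧ ∀ x y, 0 ≤ (LhMatUnif n h)⁻¹ x y := by
  refine (LhMatUnif n h).isUnit_det_and_inv_nonneg_of_mulVec_nonneg fun v hv x => ?_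
  have hLv : ∀ p ∈ grid n, 0 ≤ lh n h (extend v) p := by
    rintro ⟨a, b⟩ hp
    obtain ⟨ha, hb⟩ := mem_grid.mp hp
    simpa only [Pi.zero_apply, LhMatUnif_mulVec_apply] using hv (⟨a, by omega⟩, ⟨b, by omega⟩)
  have hext := (lh n h).nonneg_on_of_apply_nonneg_on (gridCombination n)
    (gridCombination_nonneg n) (gridCombination_lh_nonpos hodd h) (barrier_pos n)
    (gridCombination_lh_barrier_pos hodd hh.ne') hLv
  simpa only [Pi.zero_apply, extend_apply] using
    hext (x.1, x.2) (mem_grid.mpr ⟨by omega, by omega⟩)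

theorem Q2_monotone_on_uniform_mesh
    (n : ℕ) (hodd : Odd n) (hn : 0 < n) (h : ℝ) (hh : 0 < h) :
    IsUnit (LhMatUnif n h).det ∧ ∀ x y, 0 ≤ (LhMatUnif n h)⁻¹ x y :=
  Q2_monotone_on_uniform_mesh_general n hodd h hh
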